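/- arXiv:2206.14044 — 2 statements merged into one kernel-verified Lean document; each statement's English description precedes it below -/
import Mathlib

section
/- Let (P_λ)_{λ∈Λ} be a transversal family, a ∈ ℝ^n, λ₀ ∈ Λ and δ₀ > 0 with B̄_{2δ₀}(λ₀) ⊂ Λ. Let 𝒱_m denote the family of all m-dimensional coordinate planes of ℝ^l (spans of m vectors of the standard basis). Then there exist c > 0 and s₀ > 0 such that for every λ ∈ B̄_{δ₀}(λ₀), every 0 < s < s₀ and every r > 0: ∪_{V∈𝒱_m} (B̄_r(a) ∩ L_V(a,λ,s/c) ∖ {a}) ⊂ X(a,r,λ,s) ⊂ ∪_{V∈𝒱_m} (B̄_r(a) ∩ L_V(a,λ,c·s) ∖ {a}). -/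
/-!
For `x ≠ a` put `T = transMap P x a`, so that `x ∈ X(a,λ,s)` iff `|T λ| < s`, and `x ∈ L_V(a,λ,t)`
iff `T` vanishes at some `λ' ∈ λ + V` with `|λ' - λ| < t`. The first inclusion is the Lipschitz
bound on `T` coming from (H.3). For the second, `|T λ| < s ≤ C'` gives `J (DT λ) ≥ C'` by (H.2).
By compactness of `{D | ‖D‖ ≤ C'', J D ≥ C'}`, every such `D` is bounded below by a uniform
`κ > 0` on some coordinate `m`-plane. On that plane, `λ' ↦ T (λ + λ')` is approximated by `DT λ`
up to `C'' · |λ'|` by (H.3), and the surjectivity of maps close to an invertible linear map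
produces a zero within distance `O(s / κ)`.
-/

open MeasureTheory Metric Set Filter
open scoped ENNReal NNReal Topology

noncomputable section

abbrev Euc (n : ℕ) : Type := EuclideanSpace ℝ (Fin n)

namespace Slicing

variable {n m l : ℕ}

/-- The map `T_{x x'}(λ) = (P_λ(x) - P_λ(x'))/|x - x'|`. -/
def transMap (P : Euc n → Euc l → Euc m) (x x' : Euc n) (lam : Euc l) : Euc m :=
  ‖x - x'‖⁻¹ • (P x lam - P x' lam)

/-- The `m`-dimensional Jacobian `J D = √det(D ∘ Dᵀ)` of a linear map `D : ℝˡ → ℝᵐ`. -/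
def jacobian (D : Euc l →L[ℝ] Euc m) : ℝ :=
  Real.sqrt (LinearMap.det
    ((D.comp (ContinuousLinearMap.adjoint D) : Euc m →L[ℝ] Euc m) : Euc m →ₗ[ℝ] Euc m))

/-- A transversal family of maps `(P_λ)_{λ ∈ Λ}` in the sense of Definition 3.4. -/
structure IsTransversalFamily (Λ : Set (Euc l)) (P : Euc n → Euc l → Euc m) : Prop where
  isOpen : IsOpen Λ
  isBounded : Bornology.IsBounded Λ
  continuousOn : ContinuousOn (fun q : Euc n × Euc l => P q.1 q.2) (Set.univ ×ˢ Λ)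
  contDiffOn : ∀ x : Euc n, ContDiffOn ℝ 2 (P x) Λ
  derivBound : ∀ j : ℕ, j = 1 ∨ j = 2 → ∃ C : ℝ, ∀ x : Euc n, ∀ lam ∈ Λ,
    ‖iteratedFDeriv ℝ j (P x) lam‖ ≤ C
  transversality : ∃ C' : ℝ, 0 < C' ∧ ∀ x x' : Euc n, x ≠ x' → ∀ lam ∈ Λ,
    ‖transMap P x x' lam‖ ≤ C' → C' ≤ jacobian (fderiv ℝ (transMap P x x') lam)
  transDerivBound : ∃ C'' : ℝ, ∀ x x' : Euc n, x ≠ x' → ∀ lam ∈ Λ,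
    ‖fderiv ℝ (transMap P x x') lam‖ ≤ C'' ∧ ‖iteratedFDeriv ℝ 2 (transMap P x x') lam‖ ≤ C''

/-- The cone `X(a,λ,s)`. -/
def coneX (P : Euc n → Euc l → Euc m) (a : Euc n) (lam : Euc l) (s : ℝ) : Set (Euc n) :=
  {x | ‖P x lam - P a lam‖ < s * ‖x - a‖}

/-- The truncated cone `X(a,r,λ,s)`. -/
def coneXr (P : Euc n → Euc l → Euc m) (a : Euc n) (r : ℝ) (lam : Euc l) (s : ℝ) :
    Set (Euc n) :=
  coneX P a lam s ∩ closedBall a r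

/-- The cone `L_V(a,λ,s)`. -/
def coneL (P : Euc n → Euc l → Euc m) (V : Submodule ℝ (Euc l)) (a : Euc n) (lam : Euc l)
    (s : ℝ) : Set (Euc n) :=
  {x | ∃ lam' : Euc l, P x lam' = P a lam' ∧ ‖lam' - lam‖ < s ∧ lam' - lam ∈ V}

/-- `V` is an `m`-dimensional coordinate plane of `ℝˡ`. -/
def IsCoordPlane (m : ℕ) (V : Submodule ℝ (Euc l)) : Prop :=
  ∃ I : Finset (Fin l), I.card = m ∧
    V = Submodule.span ℝ {v : Euc l | ∃ i ∈ I, v = EuclideanSpace.single i (1 : ℝ)}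

/-- A countably `m`-rectifiable subset of `ℝⁿ`. -/
def CountablyRectifiable (m : ℕ) (R : Set (Euc n)) : Prop :=
  ∃ (E : ℕ → Set (Euc m)) (f : ℕ → Euc m → Euc n),
    (∀ i, Bornology.IsBounded (E i)) ∧
    (∀ i, ∃ K : ℝ≥0, LipschitzOnWith K (f i) (E i)) ∧
    R = ⋃ i, f i '' E i

/-- An `m`-rectifiable measure: `μ = θ · (H^m ⌊ R)`. -/
def IsRectifiableMeasure (m : ℕ) (μ : Measure (Euc n)) : Prop :=
  ∃ (R : Set (Euc n)) (θ : Euc n → ℝ), CountablyRectifiable m R ∧ Measurable θ ∧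
    μ = (μH[(m : ℝ)].restrict R).withDensity (fun x => ENNReal.ofReal (θ x))

/-- `S` is an `m`-dimensional `C¹` submanifold of `ℝⁿ`. -/
def IsC1Submanifold (m : ℕ) (S : Set (Euc n)) : Prop :=
  ∀ x ∈ S, ∃ (U : Set (Euc n)) (V : Set (Euc m)) (f : Euc m → Euc n),
    IsOpen U ∧ x ∈ U ∧ IsOpen V ∧ ContDiffOn ℝ 1 f V ∧ Set.InjOn f V ∧
    (∀ y ∈ V, Function.Injective (fderivWithin ℝ f V y)) ∧ S ∩ U = f '' V

/-- `E` is purely `(φ,m)`-unrectifiable. -/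
def PurelyUnrectifiable (m : ℕ) (φ : Measure (Euc n)) (E : Set (Euc n)) : Prop :=
  ∀ S : Set (Euc n), IsC1Submanifold m S → φ (S ∩ E) = 0

/-- `A` is countably `(φ,m)`-rectifiable. -/
def CountablyRectifiableWrt (m : ℕ) (φ : Measure (Euc n)) (A : Set (Euc n)) : Prop :=
  ∃ R : Set (Euc n), CountablyRectifiable m R ∧ φ (A \ R) = 0

/-- Carathéodory's construction from a set function `ζ`, using countable Borel coverings. -/
def carath {X : Type*} [EMetricSpace X] [MeasurableSpace X] (ζ : Set X → ℝ≥0∞) (E : Set X) :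
    ℝ≥0∞ :=
  ⨆ (δ : ℝ≥0∞) (_ : 0 < δ), ⨅ (G : ℕ → Set X) (_ : ∀ i, MeasurableSet (G i))
    (_ : E ⊆ ⋃ i, G i) (_ : ∀ i, EMetric.diam (G i) ≤ δ), ∑' i, ζ (G i)

/-- `L^p` norm of an `ℝ≥0∞`-valued function. -/
def lpNormENN {α : Type*} [MeasurableSpace α] (ν : Measure α) (p : ℝ≥0∞) (f : α → ℝ≥0∞) :
    ℝ≥0∞ :=
  if p = ∞ then essSup f ν else (∫⁻ a, f a ^ p.toReal ∂ν) ^ (1 / p.toReal)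

/-- The set function `ζ_p(B) = ‖λ ↦ μ_λ(B)‖_{L^p(Λ)}`. -/
def zetaP (Λ : Set (Euc l)) (μ : Euc l → Measure (Euc n)) (p : ℝ≥0∞) (B : Set (Euc n)) :
    ℝ≥0∞ :=
  lpNormENN (volume.restrict Λ) p (fun lam => μ lam B)

/-- The measure `𝓘^m_p` obtained from `ζ_p` via Carathéodory's construction. -/
def genIGMeasure (Λ : Set (Euc l)) (μ : Euc l → Measure (Euc n)) (p : ℝ≥0∞) :
    Set (Euc n) → ℝ≥0∞ :=
  carath (zetaP Λ μ p)

/-- Upper Lebesgue integral. -/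
def upperLintegral {α : Type*} [MeasurableSpace α] (ν : Measure α) (f : α → ℝ≥0∞) : ℝ≥0∞ :=
  ⨅ (g : α → ℝ≥0∞) (_ : Measurable g) (_ : ∀ a, f a ≤ g a), ∫⁻ a, g a ∂ν

/-- The set function `ζ̂(B') = ∫*_Λ μ_λ(B'_λ) dλ`. -/
def zetaHat (Λ : Set (Euc l)) (μ : Euc l → Measure (Euc n)) (B' : Set (Euc n × Euc l)) :
    ℝ≥0∞ :=
  upperLintegral (volume.restrict Λ) (fun lam => μ lam {x | (x, lam) ∈ B'})

/-- The measure `𝓘̂_m` on the product, obtained from `ζ̂` via Carathéodory's construction. -/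
def hatIG (Λ : Set (Euc l)) (μ : Euc l → Measure (Euc n)) : Set (Euc n × Euc l) → ℝ≥0∞ :=
  carath (zetaHat Λ μ)

/-- A measurable family of (Borel regular outer) measures. -/
def MeasurableFamily (Λ : Set (Euc l)) (μ : Euc l → Measure (Euc n)) : Prop :=
  ∀ B : Set (Euc n), MeasurableSet B → AEMeasurable (fun lam => μ lam B) (volume.restrict Λ)

/-- `𝓘^m_p` is an integralgeometric measure (Definition 4.1). -/
def IsIntegralgeometric (Λ : Set (Euc l)) (P : Euc n → Euc l → Euc m)
    (μ : Euc l → Measure (Euc n)) : Prop :=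
  (∀ᵐ lam ∂(volume.restrict Λ), (μ lam).map (fun x => P x lam) ≪ volume) ∧
  ∃ E : Set (Euc n), MeasurableSet E ∧
    (∀ᵐ lam ∂(volume.restrict Λ), μ lam Eᶜ = 0) ∧
    (∀ᵐ lam ∂(volume.restrict Λ), ∀ᵐ y ∂((μ lam).map (fun x => P x lam)),
      (E ∩ (fun x => P x lam) ⁻¹' {y}).Finite)

/-- A disintegration `ν = η_y ⊗ Q_♯ν`. -/
def IsDisintegration {X Y : Type*} [MeasurableSpace X] [MeasurableSpace Y] (ν : Measure X)
    (Q : X → Y) (η : Y → Measure X) : Prop :=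
  (∀ y, IsProbabilityMeasure (η y)) ∧
  (∀ᵐ y ∂(ν.map Q), η y (Q ⁻¹' {y})ᶜ = 0) ∧
  (∀ B : Set X, MeasurableSet B → Measurable fun y => η y B) ∧
  (∀ B : Set X, MeasurableSet B → ν B = ∫⁻ y, η y B ∂(ν.map Q))

/-- A `0`-rectifiable measure (a countable sum of nonnegative point masses). -/
def ZeroRectifiable {X : Type*} [MeasurableSpace X] (ν : Measure X) : Prop :=
  ∃ R : Set X, R.Countable ∧ ν Rᶜ = 0

/-- A measure supported on a finite set. -/
def FinitelySupported {X : Type*} [MeasurableSpace X] (ν : Measure X) : Prop :=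
  ∃ F : Set X, F.Finite ∧ ν Fᶜ = 0

/-- `ω(m)`, the Lebesgue measure of the unit ball of `ℝᵐ`. -/
def omegaBall (m : ℕ) : ℝ := (volume (Metric.ball (0 : Euc m) 1)).toReal

/-- The `m`-dimensional upper density `Θ^{*m}(ν, a)`. -/
def upperDensity (m : ℕ) (ν : Measure (Euc n)) (a : Euc n) : ℝ≥0∞ :=
  Filter.limsup
    (fun r : ℝ => ν (closedBall a r) / ENNReal.ofReal (omegaBall m * r ^ m)) (𝓝[>] 0)

/-- `sup_{0<r<δ} (rs)^{-m} φ(E ∩ X(a,r,λ,s))`, then `limsup` as `s → 0⁺`. -/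
def coneDensity (P : Euc n → Euc l → Euc m) (φ : Measure (Euc n)) (E : Set (Euc n))
    (a : Euc n) (lam : Euc l) (δ : ℝ) : ℝ≥0∞ :=
  Filter.limsup (fun s : ℝ =>
    ⨆ (r : ℝ) (_ : r ∈ Set.Ioo (0 : ℝ) δ),
      φ (E ∩ coneXr P a r lam s) / ENNReal.ofReal ((r * s) ^ m)) (𝓝[>] 0)



/-- The Grassmannian of `m`-dimensional linear subspaces of `ℝⁿ`. -/
def Grassmannian (n m : ℕ) : Type :=
  {V : Submodule ℝ (Euc n) // Module.finrank ℝ V = m}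

/-- The orthogonal projection `π_V : ℝⁿ → V ⊆ ℝⁿ`. -/
def projG {n m : ℕ} (V : Grassmannian n m) : Euc n →L[ℝ] Euc n :=
  (V.1.subtypeL).comp (Submodule.orthogonalProjection V.1)

instance {n m : ℕ} : TopologicalSpace (Grassmannian n m) :=
  TopologicalSpace.induced projG inferInstance

instance {n m : ℕ} : MeasurableSpace (Grassmannian n m) := borel _

instance {n m : ℕ} : BorelSpace (Grassmannian n m) := ⟨rfl⟩

/-- The action of an orthogonal transformation on the Grassmannian. -/
def grMap {n m : ℕ} (g : Euc n ≃ₗᵢ[ℝ] Euc n) (V : Grassmannian n m) : Grassmannian n m :=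
  ⟨V.1.map (g.toLinearEquiv : Euc n →ₗ[ℝ] Euc n), by
    rw [LinearEquiv.finrank_map_eq g.toLinearEquiv V.1]; exact V.2⟩

/-- A measure on the Grassmannian is invariant under the action of `O(n)`. -/
def IsONInvariant {n m : ℕ} (γ : Measure (Grassmannian n m)) : Prop :=
  ∀ g : Euc n ≃ₗᵢ[ℝ] Euc n, Measure.map (grMap g) γ = γ

/-- `η_p(B) = ‖V ↦ H^m(π_V(B))‖_{L^p(γ)}`. -/
def etaP {n m : ℕ} (γ : Measure (Grassmannian n m)) (p : ℝ≥0∞) (B : Set (Euc n)) : ℝ≥0∞ :=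
  lpNormENN γ p (fun V => μH[(m : ℝ)] (projG V '' B))

/-- Federer's integralgeometric measure `I^m_p`. -/
def IGMeasure {n m : ℕ} (γ : Measure (Grassmannian n m)) (p : ℝ≥0∞) :
    Set (Euc n) → ℝ≥0∞ :=
  carath (etaP γ p)

/-- `μ_V(B) = ∫_V H^0(B ∩ π_V⁻¹(y)) dH^m(y)`. -/
def muV {n m : ℕ} (V : Grassmannian n m) (B : Set (Euc n)) : ℝ≥0∞ :=
  ∫⁻ y in (V.1 : Set (Euc n)), Measure.count (B ∩ projG V ⁻¹' {y}) ∂μH[(m : ℝ)]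



/-- `ζ_p(B) = ‖V ↦ μ_V(B)‖_{L^p(γ)}` for the measures `μ_V`. -/
def zetaGr {n m : ℕ} (γ : Measure (Grassmannian n m)) (p : ℝ≥0∞) (B : Set (Euc n)) : ℝ≥0∞ :=
  lpNormENN γ p (fun V => muV V B)

/-- The measure `𝓘^m_p` obtained from `ζ_p` via Carathéodory's construction. -/
def IGMeasureAlt {n m : ℕ} (γ : Measure (Grassmannian n m)) (p : ℝ≥0∞) :
    Set (Euc n) → ℝ≥0∞ :=
  carath (zetaGr γ p)

theorem _root_.IsCompact.exists_pos_mul_norm_le_norm_apply {E : Type*} [NormedAddCommGroup E]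
    [NormedSpace ℝ E] [CompleteSpace E] {K : Set (E →L[ℝ] E)} (hK : IsCompact K)
    (hunit : ∀ M ∈ K, IsUnit M) : ∃ γ > 0, ∀ M ∈ K, ∀ t, γ * ‖t‖ ≤ ‖M t‖ := by
  have hcont : ContinuousOn (fun M => ‖Ring.inverse M‖) K := by
    intro M hM
    obtain ⟨u, rfl⟩ := hunit M hM
    exact (NormedRing.inverse_continuousAt u).norm.continuousWithinAt
  obtain ⟨B, hB⟩ := hK.exists_bound_of_continuousOn hcont
  refine ⟨(max B 1)⁻¹, by positivity, fun M hM t => ?_⟩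
  rw [inv_mul_le_iff₀ (by positivity)]
  have hinv : Ring.inverse M (M t) = t := by
    change (Ring.inverse M * M) t = t
    rw [Ring.inverse_mul_cancel _ (hunit M hM)]
    rfl
  calc ‖t‖ = ‖Ring.inverse M (M t)‖ := by rw [hinv]
    _ ≤ ‖Ring.inverse M‖ * ‖M t‖ := (Ring.inverse M).le_opNorm (M t)
    _ ≤ max B 1 * ‖M t‖ := by
        gcongr
        simpa using (hB M hM).trans (le_max_left B 1)

theorem _root_.ContinuousLinearMap.isUnit_of_det_ne_zero {E : Type*} [NormedAddCommGroup E]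
    [NormedSpace ℝ E] [FiniteDimensional ℝ E] {M : E →L[ℝ] E}
    (h : LinearMap.det (M : E →ₗ[ℝ] E) ≠ 0) : IsUnit M :=
  ContinuousLinearMap.isUnit_iff_isUnit_toLinearMap.2
    ((LinearMap.isUnit_iff_isUnit_det _).2 h.isUnit)

theorem exists_pos_mul_norm_le_norm_apply_of_le_abs_det {E : Type*} [NormedAddCommGroup E]
    [NormedSpace ℝ E] [FiniteDimensional ℝ E] {α : ℝ} (hα : 0 < α) (β : ℝ) :
    ∃ γ > 0, ∀ M : E →L[ℝ] E, ‖M‖ ≤ β → α ≤ |LinearMap.det (M : E →ₗ[ℝ] E)| →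
      ∀ t, γ * ‖t‖ ≤ ‖M t‖ := by
  have hK : IsCompact {M : E →L[ℝ] E | ‖M‖ ≤ β ∧ α ≤ |LinearMap.det (M : E →ₗ[ℝ] E)|} :=
    (isCompact_closedBall 0 β).of_isClosed_subset
      ((isClosed_le continuous_norm continuous_const).inter
        (isClosed_le continuous_const ContinuousLinearMap.continuous_det.abs))
      fun M hM => mem_closedBall_zero_iff.2 hM.1
  obtain ⟨γ, hγ, h⟩ := hK.exists_pos_mul_norm_le_norm_apply fun M hM =>
    M.isUnit_of_det_ne_zero (abs_pos.1 (hα.trans_le hM.2))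
  exact ⟨γ, hγ, fun M h₁ h₂ => h M ⟨h₁, h₂⟩⟩

theorem _root_.ApproximatesLinearOn.exists_eq_zero {E F : Type*} [NormedAddCommGroup E]
    [NormedSpace ℝ E] [CompleteSpace E] [NormedAddCommGroup F] [NormedSpace ℝ F]
    {g : E → F} {A : E →L[ℝ] F} {b : E} {κ ρ : ℝ} (hA : Function.Surjective A) (hκ : 0 < κ)
    (hAκ : ∀ t, κ * ‖t‖ ≤ ‖A t‖)
    (hg : ApproximatesLinearOn g A (closedBall b ρ) (κ / 2).toNNReal) (hρ : 0 ≤ ρ)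
    (hgb : ‖g b‖ ≤ κ / 2 * ρ) : ∃ t ∈ closedBall b ρ, g t = 0 := by
  choose r hr using hA
  let Ainv : A.NonlinearRightInverse :=
    { toFun := r
      nnnorm := κ⁻¹.toNNReal
      bound' := fun y => by
        have h := hAκ (r y)
        rw [hr] at h
        rw [Real.coe_toNNReal _ (by positivity), ← div_eq_inv_mul, le_div_iff₀ hκ]
        linarith
      right_inv' := hr }
  refine hg.surjOn_closedBall_of_nonlinearRightInverse Ainv hρ subset_rfl ?_
  rw [mem_closedBall, dist_comm, dist_zero_right]
  convert hgb using 2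
  simp only [Ainv, Real.coe_toNNReal _ (inv_pos.2 hκ).le, Real.coe_toNNReal _ (half_pos hκ).le,
    inv_inv]
  ring

theorem approximatesLinearOn_apply_add_comp {E F G : Type*} [NormedAddCommGroup E]
    [NormedSpace ℝ E] [NormedAddCommGroup F] [NormedSpace ℝ F] [NormedAddCommGroup G]
    [NormedSpace ℝ G] {T : E → F} {ι : G →L[ℝ] E} {lam : E} {C ρ : ℝ}
    (hT : ∀ ν ∈ closedBall lam (‖ι‖ * ρ), DifferentiableAt ℝ T ν)
    (hT' : ∀ ν ∈ closedBall lam (‖ι‖ * ρ), DifferentiableAt ℝ (fderiv ℝ T) ν)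
    (hT'' : ∀ ν ∈ closedBall lam (‖ι‖ * ρ), ‖fderiv ℝ (fderiv ℝ T) ν‖ ≤ C) :
    ApproximatesLinearOn (fun t => T (lam + ι t)) (fderiv ℝ T lam ∘L ι) (closedBall 0 ρ)
      (C * ‖ι‖ ^ 2 * ρ).toNNReal := by
  have hnorm : ∀ t ∈ closedBall (0 : G) ρ, ‖ι t‖ ≤ ‖ι‖ * ρ := fun t ht =>
    ι.le_opNorm_of_le (mem_closedBall_zero_iff.1 ht)
  have hmem : ∀ t ∈ closedBall (0 : G) ρ, lam + ι t ∈ closedBall lam (‖ι‖ * ρ) := fun t ht => by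
    rw [mem_closedBall, dist_self_add_left]
    exact hnorm t ht
  have hderiv : ∀ t ∈ closedBall (0 : G) ρ, HasFDerivWithinAt (fun t => T (lam + ι t))
      (fderiv ℝ T (lam + ι t) ∘L ι) (closedBall 0 ρ) t := fun t ht =>
    ((hT _ (hmem t ht)).hasFDerivAt.comp t (ι.hasFDerivAt.const_add lam)).hasFDerivWithinAt
  have hbound : ∀ t ∈ closedBall (0 : G) ρ,
      ‖fderiv ℝ T (lam + ι t) ∘L ι - fderiv ℝ T lam ∘L ι‖ ≤ C * ‖ι‖ ^ 2 * ρ := by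
    intro t ht
    have hlam : lam ∈ closedBall lam (‖ι‖ * ρ) :=
      mem_closedBall_self ((norm_nonneg _).trans (hnorm t ht))
    have hlip := (convex_closedBall lam (‖ι‖ * ρ)).norm_image_sub_le_of_norm_fderiv_le hT' hT''
      hlam (hmem t ht)
    rw [add_sub_cancel_left] at hlip
    have hC : 0 ≤ C := (norm_nonneg (fderiv ℝ (fderiv ℝ T) lam)).trans (hT'' lam hlam)
    rw [← ContinuousLinearMap.sub_comp]
    calc _ ≤ ‖fderiv ℝ T (lam + ι t) - fderiv ℝ T lam‖ * ‖ι‖ :=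
          ContinuousLinearMap.opNorm_comp_le _ _
      _ ≤ C * (‖ι‖ * ρ) * ‖ι‖ := by
          gcongr
          exact hlip.trans (mul_le_mul_of_nonneg_left (hnorm t ht) hC)
      _ = C * ‖ι‖ ^ 2 * ρ := by ring
  intro t ht u hu
  refine ((convex_closedBall 0 ρ).norm_image_sub_le_of_norm_hasFDerivWithin_le' hderiv hbound hu
    ht).trans ?_
  gcongr
  exact Real.le_coe_toNNReal _

theorem exists_apply_add_eq_zero {E F : Type*} [NormedAddCommGroup E] [NormedSpace ℝ E]
    [NormedAddCommGroup F] [NormedSpace ℝ F] [FiniteDimensional ℝ F]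
    {T : E → F} {ι : F →L[ℝ] E} {lam : E} {C κ ρ : ℝ} (hκ : 0 < κ) (hρ : 0 ≤ ρ)
    (hT : ∀ ν ∈ closedBall lam (‖ι‖ * ρ), DifferentiableAt ℝ T ν)
    (hT' : ∀ ν ∈ closedBall lam (‖ι‖ * ρ), DifferentiableAt ℝ (fderiv ℝ T) ν)
    (hT'' : ∀ ν ∈ closedBall lam (‖ι‖ * ρ), ‖fderiv ℝ (fderiv ℝ T) ν‖ ≤ C)
    (hA : ∀ t, κ * ‖t‖ ≤ ‖fderiv ℝ T lam (ι t)‖) (hρκ : 2 * C * ‖ι‖ ^ 2 * ρ ≤ κ)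
    (hTlam : ‖T lam‖ ≤ κ / 2 * ρ) : ∃ t ∈ closedBall 0 ρ, T (lam + ι t) = 0 := by
  have hinj : Function.Injective (fderiv ℝ T lam ∘L ι) := by
    refine (injective_iff_map_eq_zero _).2 fun t ht => norm_le_zero_iff.1 ?_
    have := hA t
    rw [← ContinuousLinearMap.comp_apply, ht, norm_zero] at this
    nlinarith [norm_nonneg t]
  have happrox := (approximatesLinearOn_apply_add_comp hT hT' hT'').mono_num
    (Real.toNNReal_le_toNNReal (by linarith) : _ ≤ (κ / 2).toNNReal)
  exact happrox.exists_eq_zero (LinearMap.injective_iff_surjective.1 hinj) hκ hA hρ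
    (by simpa using hTlam)

theorem continuous_jacobian : Continuous (jacobian : (Euc l →L[ℝ] Euc m) → ℝ) :=
  Real.continuous_sqrt.comp <| ContinuousLinearMap.continuous_det.comp <|
    continuous_id.clm_comp ContinuousLinearMap.adjoint.continuous

theorem surjective_of_jacobian_pos {D : Euc l →L[ℝ] Euc m} (h : 0 < jacobian D) :
    Function.Surjective D := by
  have hunit : IsUnit (D ∘L ContinuousLinearMap.adjoint D) :=
    ContinuousLinearMap.isUnit_of_det_ne_zero (Real.sqrt_pos.1 h).ne'
  intro y
  obtain ⟨z, hz⟩ := (ContinuousLinearMap.isUnit_iff_bijective.1 hunit).2 y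
  exact ⟨_, hz⟩

def coordEmb (f : Fin m → Fin l) : Euc m →L[ℝ] Euc l :=
  ∑ j, (EuclideanSpace.proj j).smulRight (EuclideanSpace.single (f j) (1 : ℝ))

theorem coordEmb_apply (f : Fin m → Fin l) (t : Euc m) :
    coordEmb f t = ∑ j, t j • EuclideanSpace.single (f j) (1 : ℝ) := by
  simp [coordEmb]

theorem norm_coordEmb_le (f : Fin m → Fin l) : ‖coordEmb f‖ ≤ m :=
  ContinuousLinearMap.opNorm_le_bound _ m.cast_nonneg fun t => by
    rw [coordEmb_apply]
    calc _ ≤ ∑ j, ‖t j • EuclideanSpace.single (f j) (1 : ℝ)‖ := norm_sum_le _ _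
      _ ≤ ∑ _j : Fin m, ‖t‖ := Finset.sum_le_sum fun j _ => by
          simpa [norm_smul] using PiLp.norm_apply_le t j
      _ = m * ‖t‖ := by simp

theorem exists_isCoordPlane_coordEmb_mem (hml : m ≤ l) (f : Fin m → Fin l) :
    ∃ V, IsCoordPlane m V ∧ ∀ t, coordEmb f t ∈ V := by
  obtain ⟨I, hfI, hI⟩ := Finset.exists_superset_card_eq (Finset.card_image_le.trans
    (by simp) : (Finset.univ.image f).card ≤ m) (by simpa using hml)
  refine ⟨_, ⟨I, hI, rfl⟩, fun t => ?_⟩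
  rw [coordEmb_apply]
  exact Submodule.sum_mem _ fun j _ => Submodule.smul_mem _ _
    (Submodule.subset_span ⟨f j, hfI (Finset.mem_image_of_mem f (Finset.mem_univ j)), rfl⟩)

theorem exists_det_comp_coordEmb_ne_zero {D : Euc l →L[ℝ] Euc m} (hD : Function.Surjective D) :
    ∃ f : Fin m → Fin l,
      LinearMap.det ((D ∘L coordEmb f : Euc m →L[ℝ] Euc m) : Euc m →ₗ[ℝ] Euc m) ≠ 0 := by
  set v : Fin l → Euc m := fun i => D (EuclideanSpace.single i 1)
  obtain ⟨J, a, -, hspan, hli⟩ := exists_linearIndependent' ℝ v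
  have hspan_top : Submodule.span ℝ (Set.range v) = ⊤ := by
    refine Submodule.eq_top_iff'.2 fun y => ?_
    obtain ⟨z, rfl⟩ := hD y
    rw [← (EuclideanSpace.basisFun (Fin l) ℝ).sum_repr z, map_sum]
    exact Submodule.sum_mem _ fun i _ => by
      rw [map_smul]
      exact Submodule.smul_mem _ _ (Submodule.subset_span ⟨i, by simp [v]⟩)
  have : Finite J := hli.finite
  have : Fintype J := Fintype.ofFinite J
  have hcard : Fintype.card J = m := by
    rw [linearIndependent_iff_card_eq_finrank_span.1 hli, Set.finrank, hspan, hspan_top,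
      finrank_top, finrank_euclideanSpace_fin]
  let e : Fin m ≃ J := (Fintype.equivFinOfCardEq hcard).symm
  refine ⟨a ∘ e, ?_⟩
  have hinj : Function.Injective (D ∘L coordEmb (a ∘ e)) := by
    rw [injective_iff_map_eq_zero]
    intro t ht
    simp only [ContinuousLinearMap.comp_apply, coordEmb_apply, map_sum, map_smul] at ht
    ext j
    exact Fintype.linearIndependent_iff.1 (hli.comp e e.injective) _ ht j
  exact ((LinearMap.isUnit_iff_isUnit_det _).1 ((Module.End.isUnit_iff _).2
    ⟨hinj, LinearMap.injective_iff_surjective.1 hinj⟩)).ne_zero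

theorem exists_pos_le_sum_abs_det_comp_coordEmb (C : ℝ) {C' : ℝ} (hC' : 0 < C') :
    ∃ δ > 0, ∀ D : Euc l →L[ℝ] Euc m, ‖D‖ ≤ C → C' ≤ jacobian D →
      δ ≤ ∑ f : Fin m → Fin l,
        |LinearMap.det ((D ∘L coordEmb f : Euc m →L[ℝ] Euc m) : Euc m →ₗ[ℝ] Euc m)| := by
  set S := {D : Euc l →L[ℝ] Euc m | ‖D‖ ≤ C ∧ C' ≤ jacobian D}
  rcases S.eq_empty_or_nonempty with hS | hS
  · exact ⟨1, one_pos, fun D h₁ h₂ => absurd (show D ∈ S from ⟨h₁, h₂⟩) (by simp [hS])⟩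
  have hScpt : IsCompact S :=
    (isCompact_closedBall 0 C).of_isClosed_subset
      ((isClosed_le continuous_norm continuous_const).inter
        (isClosed_le continuous_const continuous_jacobian))
      fun D hD => mem_closedBall_zero_iff.2 hD.1
  have hcont : Continuous fun D : Euc l →L[ℝ] Euc m => ∑ f : Fin m → Fin l,
      |LinearMap.det ((D ∘L coordEmb f : Euc m →L[ℝ] Euc m) : Euc m →ₗ[ℝ] Euc m)| :=
    continuous_finsetSum _ fun f _ =>
      (ContinuousLinearMap.continuous_det.comp (continuous_id.clm_comp continuous_const)).abs
  obtain ⟨D₀, hD₀, hmin⟩ := hScpt.exists_isMinOn hS hcont.continuousOn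
  refine ⟨_, ?_, fun D h₁ h₂ => hmin (show D ∈ S from ⟨h₁, h₂⟩)⟩
  obtain ⟨f, hf⟩ := exists_det_comp_coordEmb_ne_zero
    (surjective_of_jacobian_pos (hC'.trans_le hD₀.2))
  exact Finset.sum_pos' (fun _ _ => abs_nonneg _) ⟨f, Finset.mem_univ _, abs_pos.2 hf⟩

theorem exists_pos_forall_exists_coordEmb_lower_bound (hml : m ≤ l) (C : ℝ) {C' : ℝ}
    (hC' : 0 < C') :
    ∃ κ > 0, ∀ D : Euc l →L[ℝ] Euc m, ‖D‖ ≤ C → C' ≤ jacobian D →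
      ∃ f : Fin m → Fin l, ∀ t, κ * ‖t‖ ≤ ‖D (coordEmb f t)‖ := by
  obtain ⟨δ, hδ, hδD⟩ := exists_pos_le_sum_abs_det_comp_coordEmb (m := m) (l := l) C hC'
  have : Nonempty (Fin m → Fin l) := ⟨Fin.castLE hml⟩
  have hN : 0 < (Fintype.card (Fin m → Fin l) : ℝ) := Nat.cast_pos.2 Fintype.card_pos
  obtain ⟨κ, hκ, hlow⟩ := exists_pos_mul_norm_le_norm_apply_of_le_abs_det (E := Euc m)
    (div_pos hδ hN) (C * m)
  refine ⟨κ, hκ, fun D hDC hDJ => ?_⟩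
  have hmean : ∑ _f : Fin m → Fin l, δ / (Fintype.card (Fin m → Fin l) : ℝ) = δ := by
    rw [Finset.sum_const, Finset.card_univ, nsmul_eq_mul, mul_div_cancel₀ _ hN.ne']
  obtain ⟨f, -, hf⟩ := Finset.exists_le_of_sum_le Finset.univ_nonempty
    (hmean.trans_le (hδD D hDC hDJ))
  have hnorm : ‖D ∘L coordEmb f‖ ≤ C * m := (ContinuousLinearMap.opNorm_comp_le _ _).trans
    (mul_le_mul hDC (norm_coordEmb_le f) (norm_nonneg _) ((norm_nonneg _).trans hDC))
  exact ⟨f, fun t => by simpa only [ContinuousLinearMap.comp_apply] using hlow _ hnorm hf t⟩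

theorem exists_isCoordPlane_apply_eq_zero (hml : m ≤ l) {T : Euc l → Euc m} {lam : Euc l}
    {f : Fin m → Fin l} {C κ s : ℝ} (hκ : 0 < κ)
    (hT : ∀ ν ∈ closedBall lam (2 * m * s / κ), DifferentiableAt ℝ T ν)
    (hT' : ∀ ν ∈ closedBall lam (2 * m * s / κ), DifferentiableAt ℝ (fderiv ℝ T) ν)
    (hT'' : ∀ ν ∈ closedBall lam (2 * m * s / κ), ‖fderiv ℝ (fderiv ℝ T) ν‖ ≤ C)
    (hf : ∀ t, κ * ‖t‖ ≤ ‖fderiv ℝ T lam (coordEmb f t)‖) (hsκ : 4 * C * m ^ 2 * s ≤ κ ^ 2)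
    (hTlam : ‖T lam‖ ≤ s) :
    ∃ V, IsCoordPlane m V ∧
      ∃ lam', T lam' = 0 ∧ ‖lam' - lam‖ ≤ 2 * m * s / κ ∧ lam' - lam ∈ V := by
  set ρ := 2 * s / κ
  have hρ : 0 ≤ ρ := by have := (norm_nonneg _).trans hTlam; positivity
  rw [show 2 * m * s / κ = m * ρ by ring] at hT hT' hT'' ⊢
  have hι := norm_coordEmb_le f
  have hsub : closedBall lam (‖coordEmb f‖ * ρ) ⊆ closedBall lam (m * ρ) :=
    closedBall_subset_closedBall (by gcongr)
  have hC : 0 ≤ C := (norm_nonneg (fderiv ℝ (fderiv ℝ T) lam)).trans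
    (hT'' lam (mem_closedBall_self (by positivity)))
  have hρκ : 2 * C * ‖coordEmb f‖ ^ 2 * ρ ≤ κ := calc
    _ ≤ 2 * C * m ^ 2 * ρ := by gcongr
    _ = 4 * C * m ^ 2 * s / κ := by ring
    _ ≤ κ := by rwa [div_le_iff₀ hκ, ← sq]
  obtain ⟨t, ht, hzero⟩ := exists_apply_add_eq_zero hκ hρ (fun ν hν => hT ν (hsub hν))
    (fun ν hν => hT' ν (hsub hν)) (fun ν hν => hT'' ν (hsub hν)) hf hρκ
    (by rwa [show κ / 2 * ρ = s by simp only [ρ]; field_simp])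
  obtain ⟨V, hV, hιV⟩ := exists_isCoordPlane_coordEmb_mem hml f
  refine ⟨V, hV, lam + coordEmb f t, hzero, ?_, by simpa using hιV t⟩
  rw [add_sub_cancel_left]
  exact ((coordEmb f).le_opNorm_of_le (mem_closedBall_zero_iff.1 ht)).trans (by gcongr)

theorem transMap_eq_zero_iff {P : Euc n → Euc l → Euc m} {x x' : Euc n} (h : x ≠ x')
    (ν : Euc l) : transMap P x x' ν = 0 ↔ P x ν = P x' ν := by
  simp [transMap, sub_eq_zero, h]

theorem mem_coneX_iff {P : Euc n → Euc l → Euc m} {a x : Euc n} (h : x ≠ a) {lam : Euc l}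
    {s : ℝ} : x ∈ coneX P a lam s ↔ ‖transMap P x a lam‖ < s := by
  change ‖P x lam - P a lam‖ < s * ‖x - a‖ ↔ _
  rw [transMap, norm_smul, norm_inv, norm_norm,
    inv_mul_lt_iff₀ (norm_pos_iff.2 (sub_ne_zero.2 h)), mul_comm]

theorem ne_of_mem_coneX {P : Euc n → Euc l → Euc m} {a x : Euc n} {lam : Euc l} {s : ℝ}
    (hx : x ∈ coneX P a lam s) : x ≠ a := by
  rintro rfl
  simp [coneX] at hx

theorem coneX_mono {P : Euc n → Euc l → Euc m} {a : Euc n} {lam : Euc l} {s s' : ℝ}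
    (h : s ≤ s') : coneX P a lam s ⊆ coneX P a lam s' :=
  fun _ hx => hx.trans_le (mul_le_mul_of_nonneg_right h (norm_nonneg _))

theorem coneL_mono {P : Euc n → Euc l → Euc m} {V : Submodule ℝ (Euc l)} {a : Euc n}
    {lam : Euc l} {s s' : ℝ} (h : s ≤ s') : coneL P V a lam s ⊆ coneL P V a lam s' :=
  fun _ ⟨lam', h₁, h₂, h₃⟩ => ⟨lam', h₁, h₂.trans_le h, h₃⟩

namespace IsTransversalFamily

variable {Λ : Set (Euc l)} {P : Euc n → Euc l → Euc m}

theorem contDiffOn_transMap (hP : IsTransversalFamily Λ P) (x x' : Euc n) :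
    ContDiffOn ℝ 2 (transMap P x x') Λ :=
  ((hP.contDiffOn x).sub (hP.contDiffOn x')).const_smul _

theorem differentiableAt_transMap (hP : IsTransversalFamily Λ P) (x x' : Euc n) {ν : Euc l}
    (hν : ν ∈ Λ) : DifferentiableAt ℝ (transMap P x x') ν :=
  ((hP.contDiffOn_transMap x x').differentiableOn two_ne_zero).differentiableAt
    (hP.isOpen.mem_nhds hν)

theorem differentiableAt_fderiv_transMap (hP : IsTransversalFamily Λ P) (x x' : Euc n)
    {ν : Euc l} (hν : ν ∈ Λ) : DifferentiableAt ℝ (fderiv ℝ (transMap P x x')) ν := by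
  have h := (hP.contDiffOn_transMap x x').fderiv_of_isOpen (m := 1) hP.isOpen (by norm_num)
  exact (h.differentiableOn one_ne_zero).differentiableAt (hP.isOpen.mem_nhds hν)

theorem exists_pos_norm_fderiv_transMap_le (hP : IsTransversalFamily Λ P) :
    ∃ C > 0, ∀ x x', x ≠ x' → ∀ ν ∈ Λ, ‖fderiv ℝ (transMap P x x') ν‖ ≤ C ∧
      ‖fderiv ℝ (fderiv ℝ (transMap P x x')) ν‖ ≤ C := by
  obtain ⟨C, hC⟩ := hP.transDerivBound
  refine ⟨max C 1, by positivity, fun x x' h ν hν => ?_⟩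
  rw [← norm_iteratedFDeriv_one (f := fderiv ℝ (transMap P x x')), norm_iteratedFDeriv_fderiv]
  exact ⟨(hC x x' h ν hν).1.trans (le_max_left _ _), (hC x x' h ν hν).2.trans (le_max_left _ _)⟩

theorem exists_diff_coneL_subset_coneX (hP : IsTransversalFamily Λ P) {lam₀ : Euc l} {δ₀ : ℝ}
    (hball : closedBall lam₀ (2 * δ₀) ⊆ Λ) (a : Euc n) :
    ∃ c, ∀ lam ∈ closedBall lam₀ δ₀, ∀ t ≤ δ₀, ∀ V : Submodule ℝ (Euc l),
      coneL P V a lam t \ {a} ⊆ coneX P a lam (c * t) := by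
  obtain ⟨C, hC, hbound⟩ := hP.exists_pos_norm_fderiv_transMap_le
  refine ⟨C, fun lam hlam t ht V => ?_⟩
  rintro x ⟨⟨lam', hzero, hlt, -⟩, hxa : x ≠ a⟩
  rw [mem_closedBall] at hlam
  have hlam₂ : lam ∈ closedBall lam₀ (2 * δ₀) := by
    rw [mem_closedBall]; linarith [dist_nonneg (x := lam) (y := lam₀)]
  have hlam'₂ : lam' ∈ closedBall lam₀ (2 * δ₀) := by
    rw [mem_closedBall]; linarith [dist_triangle lam' lam lam₀, dist_eq_norm lam' lam]
  have hlip := (convex_closedBall lam₀ (2 * δ₀)).norm_image_sub_le_of_norm_fderiv_le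
    (fun ν hν => hP.differentiableAt_transMap x a (hball hν))
    (fun ν hν => (hbound x a hxa ν (hball hν)).1) hlam'₂ hlam₂
  rw [(transMap_eq_zero_iff hxa lam').2 hzero, sub_zero, norm_sub_rev] at hlip
  rw [mem_coneX_iff hxa]
  exact hlip.trans_lt (mul_lt_mul_of_pos_left hlt hC)

theorem exists_coneX_subset_coneL (hP : IsTransversalFamily Λ P) (hml : m ≤ l) {lam₀ : Euc l}
    {δ₀ : ℝ} (hδ₀ : 0 < δ₀) (hball : closedBall lam₀ (2 * δ₀) ⊆ Λ) (a : Euc n) :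
    ∃ c, ∃ s₀ > 0, ∀ lam ∈ closedBall lam₀ δ₀, ∀ s < s₀, ∀ x ∈ coneX P a lam s,
      ∃ V, IsCoordPlane m V ∧ x ∈ coneL P V a lam (c * s) := by
  obtain ⟨C', hC', htrans⟩ := hP.transversality
  obtain ⟨C, hC, hbound⟩ := hP.exists_pos_norm_fderiv_transMap_le
  obtain ⟨κ, hκ, hκD⟩ := exists_pos_forall_exists_coordEmb_lower_bound hml C hC'
  -- `s ≤ C'` triggers (H.2); the other two bounds keep the Newton radius `2 * m * s / κ` inside
  -- `Λ` and the linearisation error of `transMap P x a` on it below `κ / 2`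
  refine ⟨2 * m / κ + 1, min C' (min (κ ^ 2 / (4 * C * (m + 1) ^ 2)) (κ * δ₀ / (2 * (m + 1)))),
    by positivity, fun lam hlam s hs x hx => ?_⟩
  have hxa := ne_of_mem_coneX hx
  have hTs : ‖transMap P x a lam‖ < s := (mem_coneX_iff hxa).1 hx
  have hs_pos : 0 < s := (norm_nonneg _).trans_lt hTs
  have hsκ : 4 * C * m ^ 2 * s ≤ κ ^ 2 := calc
    _ ≤ 4 * C * (m + 1) ^ 2 * s := by gcongr; linarith
    _ ≤ κ ^ 2 := by
      rw [mul_comm, ← le_div_iff₀ (by positivity)]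
      exact hs.le.trans ((min_le_right _ _).trans (min_le_left _ _))
  have hsδ : 2 * m * s / κ ≤ δ₀ := by
    have h : s ≤ κ * δ₀ / (2 * (m + 1)) := hs.le.trans ((min_le_right _ _).trans (min_le_right _ _))
    rw [le_div_iff₀ (by positivity)] at h
    rw [div_le_iff₀ hκ]
    nlinarith
  have hregion : closedBall lam (2 * m * s / κ) ⊆ Λ :=
    (closedBall_subset_closedBall' (by rw [mem_closedBall] at hlam; linarith)).trans hball
  have hlamΛ : lam ∈ Λ := hregion (mem_closedBall_self (by positivity))
  obtain ⟨f, hf⟩ := hκD _ (hbound x a hxa lam hlamΛ).1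
    (htrans x a hxa lam hlamΛ (hTs.le.trans (hs.le.trans (min_le_left _ _))))
  obtain ⟨V, hV, lam', hzero, hdist, hV'⟩ := exists_isCoordPlane_apply_eq_zero hml hκ
    (fun ν hν => hP.differentiableAt_transMap x a (hregion hν))
    (fun ν hν => hP.differentiableAt_fderiv_transMap x a (hregion hν))
    (fun ν hν => (hbound x a hxa ν (hregion hν)).2) hf hsκ hTs.le
  refine ⟨V, hV, lam', (transMap_eq_zero_iff hxa _).1 hzero, hdist.trans_lt ?_, hV'⟩
  rw [add_mul, one_mul, div_mul_eq_mul_div, mul_assoc]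
  linarith

end IsTransversalFamily

theorem cone_comparison_general
    {n m l : ℕ} (hml : m ≤ l)
    (Λ : Set (Euc l)) (P : Euc n → Euc l → Euc m) (hP : IsTransversalFamily Λ P)
    (a : Euc n) (lam₀ : Euc l) (δ₀ : ℝ) (hδ₀ : 0 < δ₀)
    (hball : closedBall lam₀ (2 * δ₀) ⊆ Λ) :
    ∃ c : ℝ, 0 < c ∧ ∃ s₀ : ℝ, 0 < s₀ ∧
      ∀ lam ∈ closedBall lam₀ δ₀, ∀ s : ℝ, 0 < s → s < s₀ → ∀ r : ℝ, 0 < r →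
        (⋃ (V : Submodule ℝ (Euc l)) (_ : IsCoordPlane m V),
            (closedBall a r ∩ coneL P V a lam (s / c)) \ {a}) ⊆ coneXr P a r lam s ∧
        coneXr P a r lam s ⊆
          ⋃ (V : Submodule ℝ (Euc l)) (_ : IsCoordPlane m V),
            (closedBall a r ∩ coneL P V a lam (c * s)) \ {a} := by
  obtain ⟨c₁, hL⟩ := hP.exists_diff_coneL_subset_coneX hball a
  obtain ⟨c₂, s₂, hs₂, hX⟩ := hP.exists_coneX_subset_coneL hml hδ₀ hball a
  set c := max (max c₁ c₂) 1
  have hc : 1 ≤ c := le_max_right _ _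
  refine ⟨c, by positivity, min s₂ δ₀, lt_min hs₂ hδ₀, fun lam hlam s hs hss₀ r _ => ⟨?_, ?_⟩⟩
  · simp only [iUnion_subset_iff]
    rintro V - x ⟨⟨hxr, hxL⟩, hxa⟩
    refine ⟨coneX_mono ?_ (hL lam hlam (s / c) ?_ V ⟨hxL, hxa⟩), hxr⟩
    · calc c₁ * (s / c) ≤ c * (s / c) := by gcongr; exact le_max_of_le_left (le_max_left _ _)
        _ = s := mul_div_cancel₀ _ (by positivity)
    · exact (div_le_self hs.le hc).trans (hss₀.le.trans (min_le_right _ _))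
  · rintro x ⟨hxX, hxr⟩
    obtain ⟨V, hV, hxL⟩ := hX lam hlam s (hss₀.trans_le (min_le_left _ _)) x hxX
    refine mem_iUnion₂.2 ⟨V, hV, ⟨hxr, coneL_mono ?_ hxL⟩, ne_of_mem_coneX hxX⟩
    gcongr
    exact le_max_of_le_left (le_max_right _ _)

/-- Proposition 3.7: comparison between the cones `X(a,r,λ,s)` and
the cones `L_V(a,λ,s)` over coordinate `m`-planes `V`. -/
theorem cone_comparison
    {n m l : ℕ} (hn : 1 ≤ n) (hmn : m ≤ n) (hml : m ≤ l)
    (Λ : Set (Euc l)) (P : Euc n → Euc l → Euc m) (hP : IsTransversalFamily Λ P)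
    (a : Euc n) (lam₀ : Euc l) (δ₀ : ℝ) (hδ₀ : 0 < δ₀)
    (hball : closedBall lam₀ (2 * δ₀) ⊆ Λ) :
    ∃ c : ℝ, 0 < c ∧ ∃ s₀ : ℝ, 0 < s₀ ∧
      ∀ lam ∈ closedBall lam₀ δ₀, ∀ s : ℝ, 0 < s → s < s₀ → ∀ r : ℝ, 0 < r →
        (⋃ (V : Submodule ℝ (Euc l)) (_ : IsCoordPlane m V),
            (closedBall a r ∩ coneL P V a lam (s / c)) \ {a}) ⊆ coneXr P a r lam s ∧
        coneXr P a r lam s ⊆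
          ⋃ (V : Submodule ℝ (Euc l)) (_ : IsCoordPlane m V),
            (closedBall a r ∩ coneL P V a lam (c * s)) \ {a} :=
  cone_comparison_general hml Λ P hP a lam₀ δ₀ hδ₀ hball

end Slicing
end
end

section
/- Let (P_λ)_{λ∈Λ} be a transversal family and φ a Borel regular measure on ℝ^n. Let E ⊂ ℝ^n be φ-measurable with φ(E) < ∞, let δ > 0 and λ ∈ Λ, and define E_{2,δ}(λ) := { a ∈ ℝ^n : limsup_{s→0⁺} sup_{0<r<δ} (rs)^{-m} φ(E ∩ X(a,r,λ,s)) = ∞ }. Then the image P_λ(E_{2,δ}(λ)) is an L^m-null subset of ℝ^m. -/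
open MeasureTheory Metric Set Filter
open scoped ENNReal NNReal Topology

noncomputable section

namespace Slicing

variable {n m l : ℕ}

/-! The map `P_λ` sends the cone `X(a,r,λ,s)` into the closed ball of radius `r s` about
`P_λ(a)`, so the cone density at `a` is bounded by the upper `m`-density at `P_λ(a)` of the
finite image measure `ν = P_λ # (φ ⌊ E)`. By Besicovitch differentiation,
`ν(B(y,ρ)) / L^m(B(y,ρ))` tends to the finite derivative `dν/dL^m (y)` for `L^m`-a.e. `y`,
so that density is finite almost everywhere. -/

theorem IsTransversalFamily.continuous_left {Λ : Set (Euc l)} {P : Euc n → Euc l → Euc m}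
    (hP : IsTransversalFamily Λ P) {lam : Euc l} (hlam : lam ∈ Λ) : Continuous (P · lam) :=
  hP.continuousOn.comp_continuous (continuous_id.prodMk continuous_const)
    fun _ => ⟨mem_univ _, hlam⟩

theorem coneXr_subset_preimage_closedBall (P : Euc n → Euc l → Euc m) (a : Euc n) (r : ℝ)
    (lam : Euc l) {s : ℝ} (hs : 0 ≤ s) :
    coneXr P a r lam s ⊆ (P · lam) ⁻¹' closedBall (P a lam) (r * s) := by
  rintro x ⟨hx, hxa⟩
  rw [mem_preimage, mem_closedBall, dist_eq_norm]
  calc ‖P x lam - P a lam‖ ≤ s * ‖x - a‖ := (show _ < _ from hx).le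
    _ ≤ s * r := mul_le_mul_of_nonneg_left (by rwa [← dist_eq_norm]) hs
    _ = r * s := mul_comm s r

theorem measure_inter_coneXr_le_map {P : Euc n → Euc l → Euc m} {lam : Euc l}
    (hQ : Measurable (P · lam)) (φ : Measure (Euc n)) (E : Set (Euc n)) (a : Euc n) (r : ℝ)
    {s : ℝ} (hs : 0 ≤ s) :
    φ (E ∩ coneXr P a r lam s) ≤ (φ.restrict E).map (P · lam) (closedBall (P a lam) (r * s)) := by
  rw [Measure.map_apply hQ measurableSet_closedBall,
    Measure.restrict_apply (hQ measurableSet_closedBall), inter_comm]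
  exact inter_subset_inter_left E (coneXr_subset_preimage_closedBall P a r lam hs) |> measure_mono

theorem coneDensity_le_of_eventually_le {P : Euc n → Euc l → Euc m} {lam : Euc l}
    (hQ : Measurable (P · lam)) (φ : Measure (Euc n)) (E : Set (Euc n)) (a : Euc n) (δ : ℝ)
    {C : ℝ≥0∞} (hC : ∀ᶠ ρ in 𝓝[>] (0 : ℝ),
      (φ.restrict E).map (P · lam) (closedBall (P a lam) ρ) / ENNReal.ofReal (ρ ^ m) ≤ C) :
    coneDensity P φ E a lam δ ≤ C := by
  obtain ⟨t, ht, hCt⟩ := mem_nhdsGT_iff_exists_Ioo_subset.1 hC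
  have hsmall : ∀ᶠ s in 𝓝[>] (0 : ℝ), 0 < s ∧ δ * s < t := by
    have hlim : Tendsto (fun s : ℝ => δ * s) (𝓝 0) (𝓝 0) := by
      simpa using (continuous_const_mul δ).tendsto 0
    exact Eventually.and self_mem_nhdsWithin
      (nhdsWithin_le_nhds (hlim.eventually (gt_mem_nhds ht)))
  refine limsup_le_of_le (by isBoundedDefault) ?_
  filter_upwards [hsmall] with s ⟨hs, hδs⟩
  refine iSup₂_le fun r hr => ?_
  have hrs : r * s ∈ Ioo 0 t :=
    ⟨mul_pos hr.1 hs, (mul_lt_mul_of_pos_right hr.2 hs).trans hδs⟩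
  exact (ENNReal.div_le_div_right (measure_inter_coneXr_le_map hQ φ E a r hs.le) _).trans
    (hCt hrs)

theorem ae_exists_eventually_measure_closedBall_div_le {F : Type*} [NormedAddCommGroup F]
    [NormedSpace ℝ F] [FiniteDimensional ℝ F] [MeasurableSpace F] [BorelSpace F]
    (μ : Measure F) [μ.IsAddHaarMeasure] (ν : Measure F) [IsLocallyFiniteMeasure ν] :
    ∀ᵐ y ∂μ, ∃ C ≠ ∞, ∀ᶠ ρ in 𝓝[>] (0 : ℝ),
      ν (closedBall y ρ) / ENNReal.ofReal (ρ ^ Module.finrank ℝ F) ≤ C := by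
  filter_upwards [Besicovitch.ae_tendsto_rnDeriv ν μ, Measure.rnDeriv_lt_top ν μ]
    with y hlim hfin
  set c := μ (ball 0 1)
  have hc0 : c ≠ 0 := (measure_ball_pos μ 0 one_pos).ne'
  have hctop : c ≠ ∞ := measure_ball_lt_top.ne
  refine ⟨(ν.rnDeriv μ y + 1) * c, ENNReal.mul_ne_top (by finiteness) hctop, ?_⟩
  filter_upwards [hlim.eventually_lt_const (ENNReal.lt_add_right hfin.ne one_ne_zero),
    self_mem_nhdsWithin] with ρ hρ hρpos
  have hscale : ν (closedBall y ρ) / ENNReal.ofReal (ρ ^ Module.finrank ℝ F)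
      = ν (closedBall y ρ) / μ (closedBall y ρ) * c := by
    rw [Measure.addHaar_closedBall μ y (le_of_lt hρpos), div_eq_mul_inv, div_eq_mul_inv,
      mul_right_comm, ← div_eq_mul_inv, ← div_eq_mul_inv, ENNReal.mul_div_mul_right _ _ hc0 hctop]
  rw [hscale]
  exact mul_le_mul_left hρ.le c

theorem proj_null_of_infinite_cone_density_general
    {n m l : ℕ} (Λ : Set (Euc l)) (P : Euc n → Euc l → Euc m) (hP : IsTransversalFamily Λ P)
    (φ : Measure (Euc n)) (E : Set (Euc n)) (hfin : φ E < ∞)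
    (δ : ℝ) (lam : Euc l) (hlam : lam ∈ Λ) :
    volume ((fun x => P x lam) '' {a : Euc n | coneDensity P φ E a lam δ = ⊤}) = 0 := by
  have hQ : Measurable (P · lam) := (hP.continuous_left hlam).measurable
  have : IsFiniteMeasure (φ.restrict E) := ⟨by rwa [Measure.restrict_apply_univ]⟩
  have hdens := ae_exists_eventually_measure_closedBall_div_le volume
    ((φ.restrict E).map (P · lam))
  rw [finrank_euclideanSpace_fin] at hdens
  refine measure_mono_null ?_ (ae_iff.1 hdens)
  rintro _ ⟨a, ha, rfl⟩ ⟨C, hC, hev⟩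
  exact hC (top_le_iff.1 (ha ▸ coneDensity_le_of_eventually_le hQ φ E a δ hev))

/-- Proposition 3.10: the set where the cone density is infinite
projects onto an `L^m`-null set. -/
theorem proj_null_of_infinite_cone_density
    {n m l : ℕ} (hn : 1 ≤ n) (hmn : m ≤ n) (hml : m ≤ l)
    (Λ : Set (Euc l)) (P : Euc n → Euc l → Euc m) (hP : IsTransversalFamily Λ P)
    (φ : Measure (Euc n)) (E : Set (Euc n)) (hEmeas : NullMeasurableSet E φ)
    (hfin : φ E < ∞) (δ : ℝ) (hδ : 0 < δ) (lam : Euc l) (hlam : lam ∈ Λ) :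
    volume ((fun x => P x lam) '' {a : Euc n | coneDensity P φ E a lam δ = ⊤}) = 0 :=
  proj_null_of_infinite_cone_density_general Λ P hP φ E hfin δ lam hlam

end Slicing
end
end
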